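/- arXiv:1401.5446 — 2 statements merged into one kernel-verified Lean document; each statement's English description precedes it below -/
import Mathlib

section
/- Let K ≥ 1 and let a₁ < a₂ < … < a_{2K} be real numbers. For all complex μ and λ with Re μ < 0 < Re λ, the following telescoping identity holds: ∑_{j,k=1}^{2K} (−1)^{j+k+1} (1/(2π)) ∫_{−∞}^{∞} e^{iy(a_j − a_k)} e^{μ a_k − λ a_j} / ((μ − iy)(iy − λ)) dy = (1/(μ − λ)) ∑_{j=1}^{2K} (−1)^{j+1} e^{(μ − λ) a_j}. (This is the residue computation and cancellation underlying the composed kernel H̃_k H_j of the tacnode Riemann–Hilbert analysis.) -/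
/-!
Let `f(x) = e^{μx}` for `x ≥ 0` and `f(x) = e^{λx}` for `x ≤ 0`. Its Fourier transform is
`(λ - μ) / ((μ - 2πiξ)(2πiξ - λ))`, which is integrable since it decays like `ξ⁻²`, so Fourier
inversion evaluates the `(j, k)` integral as `2π (λ - μ)⁻¹ e^{(μ - λ) max(aⱼ, aₖ)}`.
As `a` is increasing, `max(aⱼ, aₖ) = a_{max(j, k)}`, and an alternating double sum of
`E (max j k)` telescopes: the shell `max j k = m` carries total sign `(-1)^(m+1)`.
-/

open MeasureTheory Complex Finset Real FourierTransform

lemma norm_inv_mul_le_inv_sq_add_inv_sq {𝕜 : Type*} [NormedDivisionRing 𝕜] (a b : 𝕜) :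
    ‖(a * b)⁻¹‖ ≤ (‖a‖ ^ 2)⁻¹ + (‖b‖ ^ 2)⁻¹ := by
  rw [norm_inv, norm_mul, mul_inv, ← inv_pow, ← inv_pow]
  have := inv_nonneg.2 (norm_nonneg a)
  have := inv_nonneg.2 (norm_nonneg b)
  nlinarith [sq_nonneg (‖a‖⁻¹ - ‖b‖⁻¹)]

lemma integrable_inv_sq_add_sub_sq {r : ℝ} (hr : r ≠ 0) (p : ℝ) :
    Integrable fun y : ℝ => (r ^ 2 + (y - p) ^ 2)⁻¹ := by
  refine ((integrable_inv_one_add_sq.comp_div hr).comp_sub_right p).const_mul (r ^ 2)⁻¹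
    |>.congr (.of_forall fun y => ?_)
  field_simp

lemma norm_sub_I_mul_sq (c : ℂ) (y : ℝ) : ‖c - I * y‖ ^ 2 = c.re ^ 2 + (y - c.im) ^ 2 := by
  rw [Complex.sq_norm, Complex.normSq_apply]
  simp only [sub_re, mul_re, I_re, ofReal_re, zero_mul, I_im, ofReal_im, mul_zero, sub_self,
    sub_zero, sub_im, mul_im, one_mul, zero_add]
  ring

lemma integrable_inv_sub_I_mul_mul_I_mul_sub {mu lam : ℂ} (hmu : mu.re ≠ 0) (hlam : lam.re ≠ 0) :
    Integrable fun y : ℝ => ((mu - I * y) * (I * y - lam))⁻¹ := by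
  refine ((integrable_inv_sq_add_sub_sq hmu mu.im).add
    (integrable_inv_sq_add_sub_sq hlam lam.im)).mono' (by fun_prop) (.of_forall fun y => ?_)
  rw [Pi.add_apply, ← norm_sub_I_mul_sq, ← norm_sub_I_mul_sq, norm_sub_rev lam]
  exact norm_inv_mul_le_inv_sq_add_inv_sq _ _

lemma sub_I_mul_ne_zero {c : ℂ} (hc : c.re ≠ 0) (y : ℝ) : c - I * y ≠ 0 :=
  fun h => hc (by simpa using congrArg re h)

noncomputable def twoSidedExp (mu lam : ℂ) (x : ℝ) : ℂ :=
  cexp (mu * max x 0 + lam * min x 0)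

section twoSidedExp

open Set

variable {mu lam : ℂ}

lemma twoSidedExp_of_nonneg {x : ℝ} (hx : 0 ≤ x) : twoSidedExp mu lam x = cexp (mu * x) := by
  simp [twoSidedExp, hx]

lemma twoSidedExp_of_nonpos {x : ℝ} (hx : x ≤ 0) : twoSidedExp mu lam x = cexp (lam * x) := by
  simp [twoSidedExp, hx]

lemma continuous_twoSidedExp : Continuous (twoSidedExp mu lam) := by
  unfold twoSidedExp
  fun_prop

lemma cexp_mul_twoSidedExp (c : ℂ) (x : ℝ) :
    cexp (c * x) * twoSidedExp mu lam x = twoSidedExp (mu + c) (lam + c) x := by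
  rw [twoSidedExp, twoSidedExp, ← Complex.exp_add]
  have hx : (x : ℂ) = (max x 0 : ℝ) + (min x 0 : ℝ) := by
    rw [← ofReal_add, max_add_min, add_zero]
  rw [hx]
  ring_nf

lemma integrableOn_twoSidedExp_Iic (hlam : 0 < lam.re) :
    IntegrableOn (twoSidedExp mu lam) (Iic 0) :=
  (integrableOn_exp_mul_complex_Iic hlam 0).congr_fun
    (fun _ hx => (twoSidedExp_of_nonpos hx).symm) measurableSet_Iic

lemma integrableOn_twoSidedExp_Ioi (hmu : mu.re < 0) :
    IntegrableOn (twoSidedExp mu lam) (Ioi 0) :=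
  (integrableOn_exp_mul_complex_Ioi hmu 0).congr_fun
    (fun _ hx => (twoSidedExp_of_nonneg (le_of_lt hx)).symm) measurableSet_Ioi

lemma integrable_twoSidedExp (hmu : mu.re < 0) (hlam : 0 < lam.re) :
    Integrable (twoSidedExp mu lam) := by
  rw [← integrableOn_univ, ← Iic_union_Ioi (a := 0)]
  exact (integrableOn_twoSidedExp_Iic hlam).union (integrableOn_twoSidedExp_Ioi hmu)

lemma integral_twoSidedExp (hmu : mu.re < 0) (hlam : 0 < lam.re) :
    ∫ x, twoSidedExp mu lam x = lam⁻¹ - mu⁻¹ := by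
  rw [← intervalIntegral.integral_Iic_add_Ioi (b := 0) (integrableOn_twoSidedExp_Iic hlam)
      (integrableOn_twoSidedExp_Ioi hmu),
    setIntegral_congr_fun measurableSet_Iic (fun _ hx => twoSidedExp_of_nonpos hx),
    setIntegral_congr_fun measurableSet_Ioi (fun _ hx => twoSidedExp_of_nonneg (le_of_lt hx)),
    integral_exp_mul_complex_Iic hlam, integral_exp_mul_complex_Ioi hmu]
  simp only [ofReal_zero, mul_zero, Complex.exp_zero]
  ring

lemma fourier_twoSidedExp (hmu : mu.re < 0) (hlam : 0 < lam.re) (ξ : ℝ) :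
    𝓕 (twoSidedExp mu lam) ξ =
      (lam - mu) * ((mu - I * (2 * π * ξ : ℝ)) * (I * (2 * π * ξ : ℝ) - lam))⁻¹ := by
  set w : ℝ := 2 * π * ξ
  have hphase (v : ℝ) : ((-2 * π * v * ξ : ℝ) * I) = (-(I * w)) * v := by
    simp only [w]; push_cast; ring
  simp_rw [Real.fourier_real_eq_integral_exp_smul, smul_eq_mul, hphase, cexp_mul_twoSidedExp,
    ← sub_eq_add_neg]
  rw [integral_twoSidedExp (by simpa using hmu) (by simpa using hlam)]
  have h1 := sub_I_mul_ne_zero hmu.ne w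
  have h2 := sub_I_mul_ne_zero hlam.ne' w
  have h2' : I * w - lam ≠ 0 := sub_ne_zero.2 (sub_ne_zero.1 h2).symm
  field_simp
  ring

theorem integral_cexp_I_mul_div (hmu : mu.re < 0) (hlam : 0 < lam.re) (b : ℝ) :
    ∫ y : ℝ, cexp (I * y * b) / ((mu - I * y) * (I * y - lam)) =
      2 * π / (lam - mu) * twoSidedExp mu lam b := by
  set G : ℝ → ℂ := fun y => ((mu - I * y) * (I * y - lam))⁻¹
  have hG : Integrable G := integrable_inv_sub_I_mul_mul_I_mul_sub hmu.ne hlam.ne'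
  have hF : 𝓕 (twoSidedExp mu lam) = fun ξ => (lam - mu) * G (2 * π * ξ) :=
    funext fun ξ => by simpa [G] using fourier_twoSidedExp hmu hlam ξ
  have hinv := (integrable_twoSidedExp hmu hlam).fourierInv_fourier_eq
    (by rw [hF]; exact (hG.comp_mul_left' two_pi_pos.ne').const_mul _)
    continuous_twoSidedExp.continuousAt (v := b)
  set H : ℝ → ℂ := fun y => cexp (I * y * b) / ((mu - I * y) * (I * y - lam))
  have hrescale : 𝓕⁻ (𝓕 (twoSidedExp mu lam)) b = (lam - mu) / (2 * π) * ∫ y, H y := by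
    calc 𝓕⁻ (𝓕 (twoSidedExp mu lam)) b = ∫ v : ℝ, (lam - mu) * H (2 * π * v) := by
          rw [hF, Real.fourierInv_eq']
          refine integral_congr_ae (.of_forall fun v => ?_)
          simp only [H, G, smul_eq_mul, div_eq_mul_inv, RCLike.inner_apply, conj_trivial]
          push_cast
          ring_nf
      _ = (lam - mu) / (2 * π) * ∫ y, H y := by
          rw [integral_const_mul, Measure.integral_comp_mul_left, abs_of_pos (by positivity),
            real_smul]
          push_cast
          ring
  have hsub : lam - mu ≠ 0 := sub_ne_zero.2 fun h => by linarith [congrArg re h]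
  rw [hrescale] at hinv
  rw [← hinv]
  field_simp

lemma cexp_mul_twoSidedExp_sub (s t : ℝ) :
    cexp (mu * t - lam * s) * twoSidedExp mu lam (s - t) = cexp ((mu - lam) * max s t) := by
  rcases le_total s t with hst | hts
  · rw [twoSidedExp_of_nonpos (sub_nonpos.2 hst), ← Complex.exp_add, max_eq_right hst]
    push_cast
    ring_nf
  · rw [twoSidedExp_of_nonneg (sub_nonneg.2 hts), ← Complex.exp_add, max_eq_left hts]
    push_cast
    ring_nf

lemma integral_cexp_I_mul_sub_mul_cexp_div (hmu : mu.re < 0) (hlam : 0 < lam.re)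
    (s t : ℝ) :
    ∫ y : ℝ, cexp (I * y * (s - t)) * cexp (mu * t - lam * s) /
        ((mu - I * y) * (I * y - lam)) =
      2 * π / (lam - mu) * cexp ((mu - lam) * max s t) := by
  simp_rw [mul_comm (cexp (I * _ * _)), mul_div_assoc, integral_const_mul]
  rw [← ofReal_sub, integral_cexp_I_mul_div hmu hlam, mul_left_comm,
    cexp_mul_twoSidedExp_sub]
  ring

end twoSidedExp

section AlternatingSums

variable {R : Type*} [CommRing R]

lemma two_mul_sum_Icc_neg_one_pow (n : ℕ) :
    2 * ∑ k ∈ Icc 1 n, (-1 : R) ^ k = (-1) ^ n - 1 := by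
  induction n with
  | zero => simp
  | succ n ih =>
    rw [sum_Icc_succ_top (by omega), mul_add, ih, pow_succ]
    ring

lemma sum_Icc_neg_one_pow_mul_max_left (E : ℕ → R) (n : ℕ) :
    ∑ j ∈ Icc 1 n, (-1 : R) ^ (j + (n + 1)) * E (max j (n + 1)) =
      (-1) ^ (n + 1) * (∑ j ∈ Icc 1 n, (-1) ^ j) * E (n + 1) := by
  rw [mul_sum, sum_mul]
  refine sum_congr rfl fun j hj => ?_
  rw [max_eq_right (by grind), pow_add]
  ring

lemma sum_Icc_sum_Icc_neg_one_pow_mul_max (E : ℕ → R) (n : ℕ) :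
    ∑ j ∈ Icc 1 n, ∑ k ∈ Icc 1 n, (-1 : R) ^ (j + k) * E (max j k) =
      ∑ j ∈ Icc 1 n, (-1) ^ (j + 1) * E j := by
  induction n with
  | zero => simp
  | succ n ih =>
    have hrow : ∑ k ∈ Icc 1 n, (-1 : R) ^ (n + 1 + k) * E (max (n + 1) k) =
        ∑ k ∈ Icc 1 n, (-1 : R) ^ (k + (n + 1)) * E (max k (n + 1)) :=
      sum_congr rfl fun k _ => by rw [add_comm, max_comm]
    simp only [sum_Icc_succ_top (show 1 ≤ n + 1 by omega), sum_add_distrib, ih, hrow,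
      sum_Icc_neg_one_pow_mul_max_left, max_self]
    linear_combination (-1 : R) ^ (n + 1) * E (n + 1) * two_mul_sum_Icc_neg_one_pow (R := R) n

theorem tacnode_HH_telescoping_general (K : ℕ) (a : ℕ → ℝ)
    (ha : StrictMonoOn a (Set.Icc 1 (2 * K)))
    (mu lam : ℂ) (hmu : mu.re < 0) (hlam : 0 < lam.re) :
    ∑ j ∈ Finset.Icc 1 (2 * K), ∑ k ∈ Finset.Icc 1 (2 * K),
        (-1 : ℂ) ^ (j + k + 1) *
          ((1 / (2 * (Real.pi : ℂ))) *
            ∫ y : ℝ,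
              Complex.exp (Complex.I * y * (a j - a k)) *
                Complex.exp (mu * a k - lam * a j) /
                ((mu - Complex.I * y) * (Complex.I * y - lam))) =
      (1 / (mu - lam)) *
        ∑ j ∈ Finset.Icc 1 (2 * K),
          (-1 : ℂ) ^ (j + 1) * Complex.exp ((mu - lam) * a j) := by
  have hsub : mu - lam ≠ 0 := sub_ne_zero.2 fun h => by linarith [congrArg re h]
  have hterm : ∀ j ∈ Icc 1 (2 * K), ∀ k ∈ Icc 1 (2 * K),
      (-1 : ℂ) ^ (j + k + 1) * ((1 / (2 * (π : ℂ))) *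
        ∫ y : ℝ, cexp (I * y * (a j - a k)) * cexp (mu * a k - lam * a j) /
          ((mu - I * y) * (I * y - lam))) =
      (-1) ^ (j + k) * (cexp ((mu - lam) * a (max j k)) / (mu - lam)) := by
    intro j hj k hk
    rw [integral_cexp_I_mul_sub_mul_cexp_div hmu hlam,
      ← ha.monotoneOn.map_max (by simpa using hj) (by simpa using hk)]
    have hsub' : lam - mu ≠ 0 := sub_ne_zero.2 (sub_ne_zero.1 hsub).symm
    field_simp
    ring
  rw [sum_congr rfl fun j hj => sum_congr rfl (hterm j hj),
    sum_Icc_sum_Icc_neg_one_pow_mul_max (fun m => cexp ((mu - lam) * a m) / (mu - lam)), mul_sum]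
  exact sum_congr rfl fun j _ => by ring

/-- The residue computation and telescoping cancellation underlying the composed kernel
`H̃ₖ Hⱼ` of the tacnode Riemann–Hilbert analysis: for strictly increasing endpoints
`a₁ < ⋯ < a_{2K}` and `Re μ < 0 < Re λ`,
`∑_{j,k=1}^{2K} (−1)^{j+k+1} (1/2π) ∫ e^{iy(aⱼ−aₖ)} e^{μaₖ−λaⱼ} / ((μ−iy)(iy−λ)) dy
  = (1/(μ−λ)) ∑_{j=1}^{2K} (−1)^{j+1} e^{(μ−λ)aⱼ}`. -/
theorem tacnode_HH_telescoping (K : ℕ) (hK : 1 ≤ K) (a : ℕ → ℝ)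
    (ha : StrictMonoOn a (Set.Icc 1 (2 * K)))
    (mu lam : ℂ) (hmu : mu.re < 0) (hlam : 0 < lam.re) :
    ∑ j ∈ Finset.Icc 1 (2 * K), ∑ k ∈ Finset.Icc 1 (2 * K),
        (-1 : ℂ) ^ (j + k + 1) *
          ((1 / (2 * (Real.pi : ℂ))) *
            ∫ y : ℝ,
              Complex.exp (Complex.I * y * (a j - a k)) *
                Complex.exp (mu * a k - lam * a j) /
                ((mu - Complex.I * y) * (Complex.I * y - lam))) =
      (1 / (mu - lam)) *
        ∑ j ∈ Finset.Icc 1 (2 * K),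
          (-1 : ℂ) ^ (j + 1) * Complex.exp ((mu - lam) * a j) :=
  tacnode_HH_telescoping_general K a ha mu lam hmu hlam
end AlternatingSums
end

section
/- There is a constant C > 0 such that for every σ ≥ 1 and all real u, v with u ≥ 2^{2/3}σ and v ≥ 2^{2/3}σ, the Airy kernel satisfies | ∫_0^∞ Ai(u + t) Ai(v + t) dt | ≤ (C/√σ) · e^{−(2/3) u^{3/2} − (2/3) v^{3/2}}. In particular the Airy kernel restricted to [2^{2/3}σ, ∞) is uniformly exponentially small as σ → +∞. -/
open MeasureTheory Set Complex

/-- `e^{iπ/3}`. -/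
noncomputable def eP : ℂ := Complex.exp (Real.pi / 3 * Complex.I)

/-- `e^{-iπ/3}`. -/
noncomputable def eM : ℂ := Complex.exp (-(Real.pi / 3) * Complex.I)

/-- The Airy function `Ai(x)`. -/
noncomputable def Ai (x : ℝ) : ℂ :=
  (2 * Real.pi * Complex.I)⁻¹ *
    ∫ u in Ioi (0 : ℝ),
      (eP * Complex.exp (-(u : ℂ) ^ 3 / 3 - x * (eP * u))
        - eM * Complex.exp (-(u : ℂ) ^ 3 / 3 - x * (eM * u)))

/-!
Moving the starting point of both rays of the contour from `0` to `√x`, the positive saddle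
point of `λ³/3 - xλ`, does not change `Ai x`: the integrand is entire and decays like
`e^{-u³/3}` along the half-strip between a ray and its shift, and the segment `[0, √x]` picked
up on the two rays cancels in the difference. On the shifted rays `√x + e^{±iπ/3} u` the real
part of the exponent is `-(2/3) x^{3/2} - √x u²/2 - u³/3`, whence `|Ai x| ≤ e^{-(2/3) x^{3/2}}`
for `x ≥ 0`. Since `(u + t)^{3/2} ≥ u^{3/2} + (3/2) √u t`, for `u, v ≥ σ` the integrand of the
kernel is at most `e^{-(2/3) u^{3/2} - (2/3) v^{3/2}} e^{-2√σ t}`, and integrating in `t` gives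
the factor `1/(2√σ)`.
-/

-- `ω ^ 2 - ω + 1 = 0` holds exactly for `ω = e^{±iπ/3}`.
section

variable {ω : ℂ}

lemma pow_three_eq_neg_one_of_sq_sub_add_one (hω : ω ^ 2 - ω + 1 = 0) : ω ^ 3 = -1 := by
  linear_combination (ω + 1) * hω

lemma re_eq_half_of_sq_sub_add_one (hω : ω ^ 2 - ω + 1 = 0) : ω.re = 1 / 2 := by
  have hre := congrArg re hω
  have him := congrArg im hω
  simp only [sq, add_re, sub_re, mul_re, one_re, zero_re, add_im, sub_im, mul_im, one_im,
    add_zero, zero_im] at hre him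
  have him_ne : ω.im ≠ 0 := by
    rintro h
    rw [h] at hre
    nlinarith [sq_nonneg (ω.re - 1 / 2)]
  have hprod : (2 * ω.re - 1) * ω.im = 0 := by linarith
  linarith [(mul_eq_zero.mp hprod).resolve_right him_ne]

lemma norm_eq_one_of_sq_sub_add_one (hω : ω ^ 2 - ω + 1 = 0) : ‖ω‖ = 1 := by
  have h := congrArg norm (pow_three_eq_neg_one_of_sq_sub_add_one hω)
  rw [norm_pow, norm_neg, norm_one] at h
  exact (pow_eq_one_iff_of_nonneg (norm_nonneg ω) (by norm_num)).mp h

lemma re_sq_eq_neg_half_of_sq_sub_add_one (hω : ω ^ 2 - ω + 1 = 0) : (ω ^ 2).re = -1 / 2 := by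
  rw [show ω ^ 2 = ω - 1 by linear_combination hω, sub_re, re_eq_half_of_sq_sub_add_one hω]
  norm_num

end

lemma eP_add_eM : eP + eM = 1 := by
  rw [eP, eM, ← two_cos, show (Real.pi : ℂ) / 3 = ((Real.pi / 3 : ℝ) : ℂ) by push_cast; ring,
    ← ofReal_cos, Real.cos_pi_div_three]
  norm_num

lemma eP_mul_eM : eP * eM = 1 := by
  rw [eP, eM, ← Complex.exp_add]; simp

lemma eP_sq_sub_add_one : eP ^ 2 - eP + 1 = 0 := by
  linear_combination eP * eP_add_eM - eP_mul_eM

lemma eM_sq_sub_add_one : eM ^ 2 - eM + 1 = 0 := by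
  linear_combination eM * eP_add_eM - eP_mul_eM

lemma exp_neg_cube_div_three_le {u : ℝ} (hu : 0 ≤ u) :
    Real.exp (-u ^ 3 / 3) ≤ Real.exp (2 / 3) * Real.exp (-u) := by
  rw [← Real.exp_add, Real.exp_le_exp]
  nlinarith [mul_nonneg (sq_nonneg (u - 1)) (by linarith : 0 ≤ u + 2)]

lemma integrableOn_exp_neg_cube :
    IntegrableOn (fun u : ℝ => Real.exp (-u ^ 3 / 3)) (Ioi 0) := by
  refine ((exp_neg_integrableOn_Ioi 0 one_pos).const_mul (Real.exp (2 / 3))).mono' ?_ ?_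
  · exact (by fun_prop : Continuous fun u : ℝ => Real.exp (-u ^ 3 / 3)).aestronglyMeasurable
  · refine (ae_restrict_iff' measurableSet_Ioi).mpr (.of_forall fun u hu => ?_)
    rw [Real.norm_of_nonneg (Real.exp_nonneg _), neg_one_mul]
    exact exp_neg_cube_div_three_le hu.out.le

lemma tendsto_exp_neg_cube :
    Filter.Tendsto (fun u : ℝ => Real.exp (-u ^ 3 / 3)) Filter.atTop (nhds 0) := by
  refine Real.tendsto_exp_atBot.comp ?_
  simpa [neg_div] using
    (Filter.tendsto_pow_atTop (α := ℝ) three_ne_zero).atTop_div_const (by norm_num : (0 : ℝ) < 3)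

lemma integrableOn_sq_mul_exp_neg_cube :
    IntegrableOn (fun u : ℝ => u ^ 2 * Real.exp (-u ^ 3 / 3)) (Ioi 0) := by
  refine integrableOn_Ioi_deriv_of_nonneg' (g := fun u => -Real.exp (-u ^ 3 / 3))
    (fun u _ => ?_) (fun u _ => by positivity) tendsto_exp_neg_cube.neg
  have h : HasDerivAt (fun u : ℝ => -u ^ 3 / 3) (-u ^ 2) u :=
    ((hasDerivAt_pow 3 u).fun_neg.div_const 3).congr_deriv (by push_cast; ring)
  exact h.exp.fun_neg.congr_deriv (by ring)

lemma integrableOn_const_add_sq_mul_exp_neg_cube (c : ℝ) :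
    IntegrableOn (fun u : ℝ => (c + u ^ 2) * Real.exp (-u ^ 3 / 3)) (Ioi 0) := by
  refine IntegrableOn.congr_fun ((integrableOn_exp_neg_cube.const_mul c).add
    integrableOn_sq_mul_exp_neg_cube) (fun u _ => ?_) measurableSet_Ioi
  simp only [Pi.add_apply]
  ring

lemma sqrt_pow_three {x : ℝ} (hx : 0 ≤ x) : √x ^ 3 = x ^ ((3 : ℝ) / 2) := by
  rw [Real.sqrt_eq_rpow, ← Real.rpow_mul_natCast hx]
  norm_num

lemma rpow_three_halves_add_sqrt_mul_le {u t : ℝ} (hu : 0 ≤ u) (ht : 0 ≤ t) :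
    u ^ ((3 : ℝ) / 2) + 3 / 2 * √u * t ≤ (u + t) ^ ((3 : ℝ) / 2) := by
  have hsq : √(u + t) ^ 2 - √u ^ 2 = t := by
    rw [Real.sq_sqrt hu, Real.sq_sqrt (by linarith)]; ring
  have ht' : 3 / 2 * √u * t = 3 / 2 * √u * (√(u + t) ^ 2 - √u ^ 2) := by rw [hsq]
  rw [← sqrt_pow_three hu, ← sqrt_pow_three (by linarith), ht']
  -- with `s = √u`, `r = √(u + t)`: `r³ - s³ - (3/2) s (r² - s²) = (r - s)² (r + s/2)`
  nlinarith [mul_nonneg (sq_nonneg (√(u + t) - √u)) (by positivity : 0 ≤ √(u + t) + √u / 2)]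

noncomputable def airyIntegrand (x : ℝ) (z : ℂ) : ℂ := Complex.exp (z ^ 3 / 3 - x * z)

noncomputable def airyIntegrandDeriv (x : ℝ) (z : ℂ) : ℂ := (z ^ 2 - x) * airyIntegrand x z

lemma continuous_airyIntegrand (x : ℝ) : Continuous (airyIntegrand x) := by
  unfold airyIntegrand; fun_prop

lemma continuous_airyIntegrandDeriv (x : ℝ) : Continuous (airyIntegrandDeriv x) := by
  unfold airyIntegrandDeriv
  exact (by fun_prop : Continuous fun z : ℂ => z ^ 2 - x).mul (continuous_airyIntegrand x)

lemma hasDerivAt_airyIntegrand (x : ℝ) (z : ℂ) :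
    HasDerivAt (airyIntegrand x) (airyIntegrandDeriv x z) z := by
  have h : HasDerivAt (fun z : ℂ => z ^ 3 / 3 - x * z) (z ^ 2 - x) z :=
    (((hasDerivAt_pow 3 z).div_const 3).sub ((hasDerivAt_id z).const_mul (x : ℂ))).congr_deriv
      (by push_cast; ring)
  exact h.cexp.congr_deriv (mul_comm _ _)

lemma hasDerivAt_airyIntegrand_line (x : ℝ) (c w : ℂ) (t : ℝ) :
    HasDerivAt (fun t : ℝ => airyIntegrand x (c + w * t))
      (w * airyIntegrandDeriv x (c + w * t)) t := by
  have h : HasDerivAt (fun s : ℂ => c + w * s) w t :=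
    ((hasDerivAt_id (t : ℂ)).const_mul w).const_add c |>.congr_deriv (mul_one w)
  exact ((hasDerivAt_airyIntegrand x _).comp (t : ℂ) h).comp_ofReal.congr_deriv (mul_comm _ _)

section

variable {ω : ℂ}

lemma airyIntegrand_ray (hω : ω ^ 2 - ω + 1 = 0) (x u : ℝ) :
    airyIntegrand x (ω * u) = Complex.exp (-(u : ℂ) ^ 3 / 3 - x * (ω * u)) := by
  rw [airyIntegrand, mul_pow, pow_three_eq_neg_one_of_sq_sub_add_one hω]
  ring_nf

lemma norm_airyIntegrand_ray (hω : ω ^ 2 - ω + 1 = 0) (x a u : ℝ) :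
    ‖airyIntegrand x (a + ω * u)‖ =
      Real.exp (a ^ 3 / 3 - x * a + (a ^ 2 - x) * u / 2 - a * u ^ 2 / 2 - u ^ 3 / 3) := by
  have hexp : ((a : ℂ) + ω * u) ^ 3 / 3 - x * (a + ω * u) =
      ((a ^ 3 / 3 - u ^ 3 / 3 - x * a : ℝ) : ℂ) + ((a ^ 2 * u - x * u : ℝ) : ℂ) * ω
        + ((a * u ^ 2 : ℝ) : ℂ) * ω ^ 2 := by
    push_cast
    linear_combination (u : ℂ) ^ 3 / 3 * pow_three_eq_neg_one_of_sq_sub_add_one hω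
  rw [airyIntegrand, Complex.norm_exp, hexp]
  simp only [add_re, re_ofReal_mul, ofReal_re, re_eq_half_of_sq_sub_add_one hω,
    re_sq_eq_neg_half_of_sq_sub_add_one hω]
  ring_nf

lemma norm_airyIntegrand_ray_le (hω : ω ^ 2 - ω + 1 = 0) {x a u : ℝ} (ha : 0 ≤ a)
    (hax : a ^ 2 ≤ x) (hu : 0 ≤ u) :
    ‖airyIntegrand x (a + ω * u)‖ ≤ Real.exp (-u ^ 3 / 3) := by
  rw [norm_airyIntegrand_ray hω, Real.exp_le_exp]
  nlinarith [mul_nonneg ha (sq_nonneg u), mul_nonneg ha (sub_nonneg.mpr hax),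
    mul_nonneg hu (sub_nonneg.mpr hax)]

lemma norm_airyIntegrandDeriv_ray_le (hω : ω ^ 2 - ω + 1 = 0) {x a u : ℝ} (ha : 0 ≤ a)
    (hax : a ^ 2 ≤ x) (hu : 0 ≤ u) :
    ‖airyIntegrandDeriv x (a + ω * u)‖ ≤ 3 * ((x + u ^ 2) * Real.exp (-u ^ 3 / 3)) := by
  have hz : ‖(a : ℂ) + ω * u‖ ≤ a + u := by
    refine (norm_add_le _ _).trans_eq ?_
    rw [norm_mul, norm_eq_one_of_sq_sub_add_one hω, one_mul, Complex.norm_real,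
      Complex.norm_real, Real.norm_of_nonneg ha, Real.norm_of_nonneg hu]
  have hpoly : ‖((a : ℂ) + ω * u) ^ 2 - x‖ ≤ 3 * (x + u ^ 2) := by
    refine (norm_sub_le _ _).trans ?_
    rw [norm_pow, Complex.norm_real, Real.norm_of_nonneg ((sq_nonneg a).trans hax)]
    nlinarith [pow_le_pow_left₀ (norm_nonneg _) hz 2, sq_nonneg (a - u)]
  rw [airyIntegrandDeriv, norm_mul, ← mul_assoc]
  exact mul_le_mul hpoly (norm_airyIntegrand_ray_le hω ha hax hu) (norm_nonneg _)
    (by nlinarith [sq_nonneg a])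

lemma integrableOn_airyIntegrand_ray (hω : ω ^ 2 - ω + 1 = 0) {x a : ℝ} (ha : 0 ≤ a)
    (hax : a ^ 2 ≤ x) : IntegrableOn (fun u : ℝ => airyIntegrand x (a + ω * u)) (Ioi 0) := by
  refine integrableOn_exp_neg_cube.mono' ?_ ?_
  · exact ((continuous_airyIntegrand x).comp (by fun_prop)).aestronglyMeasurable
  · exact (ae_restrict_iff' measurableSet_Ioi).mpr
      (.of_forall fun u hu => norm_airyIntegrand_ray_le hω ha hax hu.out.le)

lemma integrableOn_airyIntegrandDeriv_ray (hω : ω ^ 2 - ω + 1 = 0) {x a : ℝ} (ha : 0 ≤ a)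
    (hax : a ^ 2 ≤ x) :
    IntegrableOn (fun u : ℝ => airyIntegrandDeriv x (a + ω * u)) (Ioi 0) := by
  refine ((integrableOn_const_add_sq_mul_exp_neg_cube x).const_mul 3).mono' ?_ ?_
  · exact ((continuous_airyIntegrandDeriv x).comp (by fun_prop)).aestronglyMeasurable
  · exact (ae_restrict_iff' measurableSet_Ioi).mpr
      (.of_forall fun u hu => norm_airyIntegrandDeriv_ray_le hω ha hax hu.out.le)

lemma integrableOn_airyIntegrand_ray_zero (hω : ω ^ 2 - ω + 1 = 0) {x : ℝ} (hx : 0 ≤ x) :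
    IntegrableOn (fun u : ℝ => ω * airyIntegrand x (ω * u)) (Ioi 0) := by
  simpa [IntegrableOn] using
    (integrableOn_airyIntegrand_ray hω le_rfl (by simpa using hx)).const_mul ω

lemma integral_airyIntegrandDeriv_ray (hω : ω ^ 2 - ω + 1 = 0) {x a : ℝ} (ha : 0 ≤ a)
    (hax : a ^ 2 ≤ x) :
    ∫ u in Ioi (0 : ℝ), ω * airyIntegrandDeriv x (a + ω * u) = -airyIntegrand x a := by
  have hlim : Filter.Tendsto (fun u : ℝ => airyIntegrand x (a + ω * u)) Filter.atTop (nhds 0) :=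
    squeeze_zero_norm' (Filter.eventually_ge_atTop 0 |>.mono fun u hu =>
      norm_airyIntegrand_ray_le hω ha hax hu) tendsto_exp_neg_cube
  rw [integral_Ioi_of_hasDerivAt_of_tendsto' (fun u _ => hasDerivAt_airyIntegrand_line x a ω u)
    ((integrableOn_airyIntegrandDeriv_ray hω ha hax).const_mul ω) hlim]
  simp

lemma integrable_airyIntegrandDeriv_halfStrip (hω : ω ^ 2 - ω + 1 = 0) {x b : ℝ}
    (hb : 0 ≤ b) (hbx : b ^ 2 ≤ x) :
    Integrable (Function.uncurry fun a u : ℝ => ω * airyIntegrandDeriv x (a + ω * u))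
      ((volume.restrict (uIoc 0 b)).prod (volume.restrict (Ioi 0))) := by
  rw [uIoc_of_le hb]
  refine ((integrableOn_const measure_Ioc_lt_top.ne :
    Integrable (fun _ : ℝ => (1 : ℝ)) (volume.restrict (Ioc 0 b))).mul_prod
    ((integrableOn_const_add_sq_mul_exp_neg_cube x).const_mul 3)).mono' ?_ ?_
  · exact (((continuous_airyIntegrandDeriv x).comp (by fun_prop :
      Continuous fun p : ℝ × ℝ => (p.1 : ℂ) + ω * p.2)).const_mul ω).aestronglyMeasurable
  · rw [Measure.prod_restrict, ae_restrict_iff' (measurableSet_Ioc.prod measurableSet_Ioi)]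
    refine .of_forall fun p ⟨⟨ha, hab⟩, hu⟩ => ?_
    have hax : p.1 ^ 2 ≤ x := (pow_le_pow_left₀ ha.le hab 2).trans hbx
    simpa [Function.uncurry, norm_eq_one_of_sq_sub_add_one hω] using
      norm_airyIntegrandDeriv_ray_le hω ha.le hax hu.out.le

lemma integral_airyIntegrandDeriv_segment (x b u : ℝ) :
    ∫ a in (0 : ℝ)..b, ω * airyIntegrandDeriv x (a + ω * u) =
      ω * airyIntegrand x (b + ω * u) - ω * airyIntegrand x (ω * u) := by
  have hderiv (a : ℝ) : HasDerivAt (fun a : ℝ => ω * airyIntegrand x (a + ω * u))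
      (ω * airyIntegrandDeriv x (a + ω * u)) a := by
    simpa [add_comm] using (hasDerivAt_airyIntegrand_line x (ω * u) 1 a).const_mul ω
  have hcont : Continuous fun a : ℝ => ω * airyIntegrandDeriv x (a + ω * u) :=
    ((continuous_airyIntegrandDeriv x).comp (by fun_prop)).const_mul ω
  rw [intervalIntegral.integral_eq_sub_of_hasDerivAt (fun a _ => hderiv a)
    (hcont.intervalIntegrable 0 b)]
  simp

/-- Cauchy's theorem on the half-strip `{a + ω u | 0 ≤ a ≤ b, 0 ≤ u}`: integrating
`ω f'(a + ω u)` over it first in `a` and first in `u` gives the two sides. -/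
lemma integral_ray_eq_integral_shifted_ray_add (hω : ω ^ 2 - ω + 1 = 0) {x b : ℝ}
    (hb : 0 ≤ b) (hbx : b ^ 2 ≤ x) :
    ∫ u in Ioi (0 : ℝ), ω * airyIntegrand x (ω * u) =
      (∫ u in Ioi (0 : ℝ), ω * airyIntegrand x (b + ω * u)) +
        ∫ a in (0 : ℝ)..b, airyIntegrand x a := by
  have hray (a : ℝ) (ha : a ∈ uIcc 0 b) :
      ∫ u in Ioi (0 : ℝ), ω * airyIntegrandDeriv x (a + ω * u) = -airyIntegrand x a := by
    rw [uIcc_of_le hb] at ha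
    exact integral_airyIntegrandDeriv_ray hω ha.1 ((pow_le_pow_left₀ ha.1 ha.2 2).trans hbx)
  have hswap :=
    intervalIntegral_integral_swap (integrable_airyIntegrandDeriv_halfStrip hω hb hbx)
  simp_rw [intervalIntegral.integral_congr hray, intervalIntegral.integral_neg,
    integral_airyIntegrandDeriv_segment] at hswap
  rw [integral_sub ((integrableOn_airyIntegrand_ray hω hb hbx).const_mul ω)
    (integrableOn_airyIntegrand_ray_zero hω ((sq_nonneg b).trans hbx))] at hswap
  linear_combination hswap

lemma norm_airyIntegrand_sqrt_ray_le (hω : ω ^ 2 - ω + 1 = 0) {x u : ℝ} (hx : 0 ≤ x)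
    (hu : 0 ≤ u) :
    ‖airyIntegrand x (√x + ω * u)‖ ≤
      Real.exp (2 / 3) * Real.exp (-(2 / 3) * x ^ ((3 : ℝ) / 2)) * Real.exp (-u) := by
  have hsq : √x ^ 2 = x := Real.sq_sqrt hx
  have hcube : x * √x = √x ^ 3 := by rw [pow_succ, hsq]
  rw [norm_airyIntegrand_ray hω, ← sqrt_pow_three hx, ← Real.exp_add, ← Real.exp_add,
    Real.exp_le_exp, hsq, sub_self, zero_mul, hcube]
  nlinarith [mul_nonneg (Real.sqrt_nonneg x) (sq_nonneg u),
    mul_nonneg (sq_nonneg (u - 1)) (by linarith : 0 ≤ u + 2)]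

lemma norm_integral_sqrt_ray_le (hω : ω ^ 2 - ω + 1 = 0) {x : ℝ} (hx : 0 ≤ x) :
    ‖∫ u in Ioi (0 : ℝ), ω * airyIntegrand x (√x + ω * u)‖ ≤
      Real.exp (2 / 3) * Real.exp (-(2 / 3) * x ^ ((3 : ℝ) / 2)) := by
  set E := Real.exp (2 / 3) * Real.exp (-(2 / 3) * x ^ ((3 : ℝ) / 2))
  refine (norm_integral_le_of_norm_le
    ((exp_neg_integrableOn_Ioi 0 one_pos).const_mul E) ?_).trans_eq ?_
  · refine (ae_restrict_iff' measurableSet_Ioi).mpr (.of_forall fun u hu => ?_)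
    rw [norm_mul, norm_eq_one_of_sq_sub_add_one hω, one_mul, neg_one_mul]
    exact norm_airyIntegrand_sqrt_ray_le hω hx hu.out.le
  · simp_rw [neg_one_mul]
    rw [integral_const_mul, integral_exp_neg_Ioi_zero, mul_one]

end

lemma Ai_eq_sub_shifted_rays {x : ℝ} (hx : 0 ≤ x) :
    Ai x = (2 * Real.pi * Complex.I)⁻¹ *
      ((∫ u in Ioi (0 : ℝ), eP * airyIntegrand x (√x + eP * u)) -
        ∫ u in Ioi (0 : ℝ), eM * airyIntegrand x (√x + eM * u)) := by
  have hsqrt : √x ^ 2 ≤ x := (Real.sq_sqrt hx).le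
  simp_rw [Ai, ← airyIntegrand_ray eP_sq_sub_add_one, ← airyIntegrand_ray eM_sq_sub_add_one]
  rw [integral_sub (integrableOn_airyIntegrand_ray_zero eP_sq_sub_add_one hx)
      (integrableOn_airyIntegrand_ray_zero eM_sq_sub_add_one hx),
    integral_ray_eq_integral_shifted_ray_add eP_sq_sub_add_one (Real.sqrt_nonneg x) hsqrt,
    integral_ray_eq_integral_shifted_ray_add eM_sq_sub_add_one (Real.sqrt_nonneg x) hsqrt]
  ring

lemma norm_Ai_le {x : ℝ} (hx : 0 ≤ x) : ‖Ai x‖ ≤ Real.exp (-(2 / 3) * x ^ ((3 : ℝ) / 2)) := by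
  have hexp : Real.exp (2 / 3) ≤ Real.pi := by
    linarith [Real.exp_le_exp.mpr (by norm_num : (2 / 3 : ℝ) ≤ 1), Real.exp_one_lt_d9,
      Real.pi_gt_three]
  have hnorm : ‖(2 * Real.pi * Complex.I)⁻¹‖ = (2 * Real.pi)⁻¹ := by
    simp [Real.pi_pos.le]
  rw [Ai_eq_sub_shifted_rays hx, norm_mul, hnorm, inv_mul_le_iff₀ (by positivity)]
  refine (norm_sub_le _ _).trans ?_
  nlinarith [norm_integral_sqrt_ray_le eP_sq_sub_add_one hx,
    norm_integral_sqrt_ray_le eM_sq_sub_add_one hx, Real.exp_pos (-(2 / 3) * x ^ ((3 : ℝ) / 2))]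

lemma norm_Ai_add_le {u t : ℝ} (hu : 0 ≤ u) (ht : 0 ≤ t) :
    ‖Ai (u + t)‖ ≤ Real.exp (-(2 / 3) * u ^ ((3 : ℝ) / 2)) * Real.exp (-√u * t) := by
  refine (norm_Ai_le (add_nonneg hu ht)).trans ?_
  rw [← Real.exp_add, Real.exp_le_exp]
  linarith [rpow_three_halves_add_sqrt_mul_le hu ht]

lemma norm_integral_Ai_mul_Ai_le {σ u v : ℝ} (hσ : 0 < σ) (hu : σ ≤ u) (hv : σ ≤ v) :
    ‖∫ t in Ioi (0 : ℝ), Ai (u + t) * Ai (v + t)‖ ≤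
      1 / (2 * √σ) * Real.exp (-(2 / 3) * u ^ ((3 : ℝ) / 2) - (2 / 3) * v ^ ((3 : ℝ) / 2)) := by
  set E := Real.exp (-(2 / 3) * u ^ ((3 : ℝ) / 2) - (2 / 3) * v ^ ((3 : ℝ) / 2)) with hE
  have hb : 0 < 2 * √σ := by positivity
  refine (norm_integral_le_of_norm_le
    ((exp_neg_integrableOn_Ioi 0 hb).const_mul E) ?_).trans_eq ?_
  · refine (ae_restrict_iff' measurableSet_Ioi).mpr (.of_forall fun t ht => ?_)
    have hdecay : Real.exp (-√u * t) * Real.exp (-√v * t) ≤ Real.exp (-(2 * √σ) * t) := by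
      rw [← Real.exp_add, Real.exp_le_exp]
      nlinarith [Real.sqrt_le_sqrt hu, Real.sqrt_le_sqrt hv, ht.out]
    calc ‖Ai (u + t) * Ai (v + t)‖
        ≤ (Real.exp (-(2 / 3) * u ^ ((3 : ℝ) / 2)) * Real.exp (-√u * t)) *
            (Real.exp (-(2 / 3) * v ^ ((3 : ℝ) / 2)) * Real.exp (-√v * t)) := by
          rw [norm_mul]
          exact mul_le_mul (norm_Ai_add_le (hσ.le.trans hu) ht.out.le)
            (norm_Ai_add_le (hσ.le.trans hv) ht.out.le) (norm_nonneg _) (by positivity)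
      _ = E * (Real.exp (-√u * t) * Real.exp (-√v * t)) := by
          rw [hE, sub_eq_add_neg, Real.exp_add, ← neg_mul]; ring
      _ ≤ E * Real.exp (-(2 * √σ) * t) := by gcongr
  · rw [integral_const_mul, integral_exp_mul_Ioi (neg_lt_zero.mpr hb)]
    simp [div_eq_mul_inv, mul_comm]

/-- The Airy kernel `K_Ai(u,v) = ∫₀^∞ Ai(u+t)Ai(v+t) dt` restricted to `[2^{2/3}σ, ∞)` is
uniformly exponentially small as `σ → +∞`: there is `C > 0` such that for every `σ ≥ 1` and
all `u, v ≥ 2^{2/3}σ`,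
`|K_Ai(u,v)| ≤ (C/√σ) e^{−(2/3)u^{3/2} − (2/3)v^{3/2}}`. -/
theorem airyKernel_exponentially_small :
    ∃ C > (0 : ℝ), ∀ σ : ℝ, 1 ≤ σ → ∀ u v : ℝ,
      (2 : ℝ) ^ ((2 : ℝ) / 3) * σ ≤ u → (2 : ℝ) ^ ((2 : ℝ) / 3) * σ ≤ v →
      ‖∫ t in Ioi (0 : ℝ), Ai (u + t) * Ai (v + t)‖ ≤
        C / Real.sqrt σ *
          Real.exp (-(2 / 3) * u ^ ((3 : ℝ) / 2) - (2 / 3) * v ^ ((3 : ℝ) / 2)) := by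
  refine ⟨1 / 2, by norm_num, fun σ hσ u v hu hv => ?_⟩
  have hσu : σ ≤ (2 : ℝ) ^ ((2 : ℝ) / 3) * σ :=
    le_mul_of_one_le_left (by linarith) (Real.one_le_rpow (by norm_num) (by norm_num))
  convert norm_integral_Ai_mul_Ai_le (by linarith) (hσu.trans hu) (hσu.trans hv) using 2
  ring
end
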